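/- Let $\mu$ be the Berger measure of a subnormal weighted shift $W_\alpha$ on $[0,\|W_\alpha\|^2]$, and let $x_1,\dots,x_n > 0$. Then the $n$-step extension $W_{(x_n,\dots,x_1)\alpha}$ (the weighted shift with weights $x_n,\dots,x_1,\alpha_0,\alpha_1,\dots$) is subnormal if and only if: (i) $1/t^n \in L^1(\mu)$; (ii) $x_j^2 = \frac{\int t^{-(j-1)}\,d\mu}{\int t^{-j}\,d\mu}$ for $1 \le j \le n-1$; and (iii) $x_n^2 \le \frac{\int t^{-(n-1)}\,d\mu}{\int t^{-n}\,d\mu}$. -/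

import Mathlib

open MeasureTheory

/-- The moments `γ n = α₀² ⋯ α_{n-1}²` of a weighted shift. -/
noncomputable def gam (α : ℕ → ℝ) (n : ℕ) : ℝ := ∏ k ∈ Finset.range n, α k ^ 2

/-- `μ` is the Berger measure of the weighted shift `W_α`. -/
def IsBergerMeasure (α : ℕ → ℝ) (μ : Measure ℝ) : Prop :=
  IsProbabilityMeasure μ ∧ μ (Set.Icc 0 (⨆ n, α n ^ 2))ᶜ = 0 ∧
    ∀ n : ℕ, gam α n = ∫ t, t ^ n ∂μ

/-- Berger's characterization of subnormality of the weighted shift. -/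
def BergerSubnormal (α : ℕ → ℝ) : Prop := ∃ μ : Measure ℝ, IsBergerMeasure α μ

/-- The `n`-step extension `W_{(x_n,…,x_1)α}`: prepend the weights `x_n, …, x_1`. -/
noncomputable def extSeq (n : ℕ) (x : ℕ → ℝ) (α : ℕ → ℝ) : ℕ → ℝ :=
  fun k => if k < n then x (n - k) else α (k - n)

open Set

/-!
If `ν` is a Berger measure of the extension and `γ = gam (extSeq n x α)`, the moments of `ν` from
the `n`-th on are `γ n` times those of `μ`, so `t ^ n dν = γ n dμ` by moment determinacy on a
compact interval. Hence `μ` has no atom at `0`, `γ n ∫ t⁻ʲ dμ = γ (n - j)` for `j < n` and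
`γ n ∫ t⁻ⁿ dμ = 1 - ν {0} ≤ 1`, which are conditions (ii) and (iii) written as products instead of
ratios. Conversely, under these conditions `γ n t⁻ⁿ dμ + (1 - γ n ∫ t⁻ⁿ dμ) δ₀` is a Berger measure
of the extension.
-/

section MomentDeterminacy

variable {μ ν : Measure ℝ} {a b : ℝ}

lemma Continuous.integrable_of_ae_mem_Icc [IsFiniteMeasure μ] {f : ℝ → ℝ} (hf : Continuous f)
    (hμ : ∀ᵐ t ∂μ, t ∈ Icc a b) : Integrable f μ := by
  rw [← Measure.restrict_eq_self_of_ae_mem hμ]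
  exact hf.continuousOn.integrableOn_compact isCompact_Icc

lemma integral_eval_eq_of_moments_eq [IsFiniteMeasure μ] [IsFiniteMeasure ν]
    (hμ : ∀ᵐ t ∂μ, t ∈ Icc a b) (hν : ∀ᵐ t ∂ν, t ∈ Icc a b)
    (h : ∀ k : ℕ, ∫ t, t ^ k ∂μ = ∫ t, t ^ k ∂ν) (p : Polynomial ℝ) :
    ∫ t, p.eval t ∂μ = ∫ t, p.eval t ∂ν := by
  induction p using Polynomial.induction_on' with
  | add p q hp hq =>
    simp only [Polynomial.eval_add]
    rw [integral_add, integral_add, hp, hq] <;>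
      exact Polynomial.continuous _ |>.integrable_of_ae_mem_Icc ‹_›
  | monomial k c => simp only [Polynomial.eval_monomial, integral_const_mul, h k]

lemma abs_integral_sub_le_of_ae_mem_Icc [IsFiniteMeasure μ] (hμ : ∀ᵐ t ∂μ, t ∈ Icc a b)
    {f g : ℝ → ℝ} (hf : Continuous f) (hg : Continuous g) {δ : ℝ}
    (hfg : ∀ t ∈ Icc a b, |f t - g t| ≤ δ) :
    |∫ t, f t ∂μ - ∫ t, g t ∂μ| ≤ δ * μ.real univ := by
  rw [← integral_sub (hf.integrable_of_ae_mem_Icc hμ) (hg.integrable_of_ae_mem_Icc hμ)]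
  exact norm_integral_le_of_norm_le_const (f := fun t => f t - g t) (hμ.mono hfg)

/-- Hausdorff moment determinacy: polynomials are uniformly dense in `C([a, b])`. -/
theorem ext_of_moments_eq_of_ae_mem_Icc [IsFiniteMeasure μ] [IsFiniteMeasure ν]
    (hμ : ∀ᵐ t ∂μ, t ∈ Icc a b) (hν : ∀ᵐ t ∂ν, t ∈ Icc a b)
    (h : ∀ k : ℕ, ∫ t, t ^ k ∂μ = ∫ t, t ^ k ∂ν) : μ = ν := by
  refine ext_of_forall_integral_eq_of_IsFiniteMeasure fun f => eq_of_forall_dist_le fun ε hε => ?_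
  set C := μ.real univ + ν.real univ + 1
  have hC : 0 < C := by positivity
  obtain ⟨p, hp⟩ := exists_polynomial_near_of_continuousOn a b f f.continuous.continuousOn
    (ε / C) (by positivity)
  have hfp : ∀ t ∈ Icc a b, |f t - p.eval t| ≤ ε / C := fun t ht => by
    rw [abs_sub_comm]; exact (hp t ht).le
  have hμp := abs_integral_sub_le_of_ae_mem_Icc hμ f.continuous p.continuous hfp
  have hνp := abs_integral_sub_le_of_ae_mem_Icc hν f.continuous p.continuous hfp
  rw [integral_eval_eq_of_moments_eq hμ hν h p] at hμp
  calc dist (∫ t, f t ∂μ) (∫ t, f t ∂ν)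
      ≤ |∫ t, f t ∂μ - ∫ t, p.eval t ∂ν| + |∫ t, f t ∂ν - ∫ t, p.eval t ∂ν| := by
        rw [Real.dist_eq, abs_sub_comm (∫ t, f t ∂ν)]; exact abs_sub_le _ _ _
    _ ≤ ε / C * μ.real univ + ε / C * ν.real univ := add_le_add hμp hνp
    _ ≤ ε := by
        rw [← mul_add, div_mul_eq_mul_div, div_le_iff₀ hC]
        nlinarith

end MomentDeterminacy

section WithDensity

variable {Ω : Type*} [MeasurableSpace Ω] {μ : Measure Ω} {d : Ω → ℝ}

lemma integral_withDensity_ofReal (hd : Measurable d) (hd0 : 0 ≤ᵐ[μ] d) (g : Ω → ℝ) :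
    ∫ ω, g ω ∂μ.withDensity (fun ω => ENNReal.ofReal (d ω)) = ∫ ω, d ω * g ω ∂μ := by
  rw [integral_withDensity_eq_integral_toReal_smul hd.ennreal_ofReal
    (ae_of_all _ fun _ => ENNReal.ofReal_lt_top)]
  refine integral_congr_ae (hd0.mono fun ω hω => ?_)
  simp [ENNReal.toReal_ofReal hω]

lemma integrable_withDensity_ofReal_iff (hd : Measurable d) (hd0 : 0 ≤ᵐ[μ] d) (g : Ω → ℝ) :
    Integrable g (μ.withDensity fun ω => ENNReal.ofReal (d ω)) ↔
      Integrable (fun ω => d ω * g ω) μ := by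
  rw [integrable_withDensity_iff_integrable_smul' hd.ennreal_ofReal
    (ae_of_all _ fun _ => ENNReal.ofReal_lt_top)]
  refine integrable_congr (hd0.mono fun ω hω => ?_)
  simp [ENNReal.toReal_ofReal hω]

end WithDensity

section InversePowers

variable {μ : Measure ℝ} {n j : ℕ}

lemma ae_pos_of_ae_nonneg_of_measure_zero (hμ : ∀ᵐ t ∂μ, 0 ≤ t) (h0 : μ {0} = 0) :
    ∀ᵐ t ∂μ, 0 < t := by
  filter_upwards [hμ, measure_eq_zero_iff_ae_notMem.1 h0] with t ht ht0
  exact ht.lt_of_ne' ht0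

lemma integrable_one_div_pow_of_le [IsFiniteMeasure μ] (hμ : ∀ᵐ t ∂μ, 0 < t)
    (hint : Integrable (fun t => 1 / t ^ n) μ) (hj : j ≤ n) :
    Integrable (fun t => 1 / t ^ j) μ := by
  have hmeas : Measurable fun t : ℝ => 1 / t ^ j := by fun_prop
  refine (hint.add (integrable_const 1)).mono' hmeas.aestronglyMeasurable
    (hμ.mono fun t ht => ?_)
  simp only [Pi.add_apply, Real.norm_eq_abs, one_div, ← inv_pow]
  rw [abs_of_pos (by positivity)]
  rcases le_total t⁻¹ 1 with h | h
  · linarith [pow_le_one₀ (inv_nonneg.2 ht.le) h (n := j), pow_nonneg (inv_nonneg.2 ht.le) n]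
  · linarith [pow_le_pow_right₀ h hj]

lemma integral_one_div_pow_pos [NeZero μ] (hμ : ∀ᵐ t ∂μ, 0 < t)
    (hint : Integrable (fun t => 1 / t ^ j) μ) : 0 < ∫ t, 1 / t ^ j ∂μ := by
  rw [integral_pos_iff_support_of_nonneg_ae (hμ.mono fun t ht => by positivity) hint]
  have hsupp : μ (Function.support fun t : ℝ => 1 / t ^ j)ᶜ = 0 :=
    mem_ae_iff.1 (hμ.mono fun t ht => by simp [ht.ne'])
  rw [measure_congr (ae_eq_univ.2 hsupp)]
  exact Measure.measure_univ_pos.2 (NeZero.ne μ)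

end InversePowers

section ShiftedMoments

variable {μ ν : Measure ℝ} {n : ℕ} {b c : ℝ}

lemma withDensity_pow_eq_smul_of_shifted_moments [IsFiniteMeasure μ] [IsFiniteMeasure ν]
    (hc : 0 ≤ c) (hμ : ∀ᵐ t ∂μ, t ∈ Icc 0 b) (hν : ∀ᵐ t ∂ν, t ∈ Icc 0 b)
    (h : ∀ m, ∫ t, t ^ (n + m) ∂ν = c * ∫ t, t ^ m ∂μ) :
    ν.withDensity (fun t => ENNReal.ofReal (t ^ n)) = ENNReal.ofReal c • μ := by
  have hν0 : 0 ≤ᵐ[ν] fun t => t ^ n := hν.mono fun t ht => pow_nonneg ht.1 n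
  have := μ.smul_finite (ENNReal.ofReal_ne_top (r := c))
  have : IsFiniteMeasure (ν.withDensity fun t => ENNReal.ofReal (t ^ n)) :=
    isFiniteMeasure_withDensity_ofReal
      ((continuous_pow n).integrable_of_ae_mem_Icc hν).hasFiniteIntegral
  refine ext_of_moments_eq_of_ae_mem_Icc (withDensity_absolutelyContinuous _ _ hν)
    (Measure.ae_smul_measure hμ _) fun m => ?_
  rw [integral_withDensity_ofReal (by fun_prop) hν0, integral_smul_measure,
    ENNReal.toReal_ofReal hc, smul_eq_mul, ← h m]
  simp_rw [pow_add]

theorem inverse_moments_of_shifted_moments [IsFiniteMeasure μ] [IsProbabilityMeasure ν]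
    (hn : n ≠ 0) (hc : 0 < c) (hμ : ∀ᵐ t ∂μ, t ∈ Icc 0 b) (hν : ∀ᵐ t ∂ν, t ∈ Icc 0 b)
    (h : ∀ m, ∫ t, t ^ (n + m) ∂ν = c * ∫ t, t ^ m ∂μ) :
    μ {0} = 0 ∧ Integrable (fun t => 1 / t ^ n) μ ∧
      (∀ j < n, c * ∫ t, 1 / t ^ j ∂μ = ∫ t, t ^ (n - j) ∂ν) ∧
      c * ∫ t, 1 / t ^ n ∂μ ≤ 1 := by
  have hν0 : 0 ≤ᵐ[ν] fun t => t ^ n := hν.mono fun t ht => pow_nonneg ht.1 n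
  have hdens := withDensity_pow_eq_smul_of_shifted_moments hc.le hμ hν h
  have hc' : ENNReal.ofReal c ≠ 0 := ENNReal.ofReal_ne_zero_iff.2 hc
  have hintegral : ∀ g : ℝ → ℝ, c * ∫ t, g t ∂μ = ∫ t, t ^ n * g t ∂ν := fun g => by
    rw [← integral_withDensity_ofReal (by fun_prop) hν0, hdens, integral_smul_measure,
      ENNReal.toReal_ofReal hc.le, smul_eq_mul]
  have hbound : ∀ t : ℝ, ‖t ^ n * (1 / t ^ n)‖ ≤ 1 := fun t => by
    rw [mul_one_div, Real.norm_eq_abs, abs_div]; exact div_self_le_one _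
  refine ⟨?_, ?_, fun j hj => ?_, ?_⟩
  · have h0 : (ν.withDensity fun t => ENNReal.ofReal (t ^ n)) {0} =
        (ENNReal.ofReal c • μ) {0} := by
      rw [hdens]
    rw [withDensity_apply _ (measurableSet_singleton 0), Measure.restrict_singleton,
      lintegral_smul_measure, lintegral_dirac, zero_pow hn, ENNReal.ofReal_zero, smul_zero,
      Measure.smul_apply, smul_eq_mul] at h0
    exact (mul_eq_zero.1 h0.symm).resolve_left hc'
  · rw [← integrable_smul_measure hc' ENNReal.ofReal_ne_top, ← hdens,
      integrable_withDensity_ofReal_iff (by fun_prop) hν0]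
    have hmeas : Measurable fun t : ℝ => t ^ n * (1 / t ^ n) := by fun_prop
    exact (integrable_const 1).mono' hmeas.aestronglyMeasurable (ae_of_all _ hbound)
  · rw [hintegral]
    congr 1 with t
    rcases eq_or_ne t 0 with rfl | ht
    · simp [hn, (Nat.sub_pos_of_lt hj).ne']
    · rw [pow_sub₀ t ht hj.le, one_div]
  · rw [hintegral]
    simpa using (le_abs_self _).trans
      (norm_integral_le_of_norm_le_const (μ := ν) (ae_of_all _ hbound))

theorem exists_shifted_moments_of_inverse_moments [IsFiniteMeasure μ] (hn : n ≠ 0) (hc : 0 ≤ c)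
    (hb : 0 ≤ b) (hμ : ∀ᵐ t ∂μ, t ∈ Icc 0 b) (h0 : μ {0} = 0)
    (hint : Integrable (fun t => 1 / t ^ n) μ) (hle : c * ∫ t, 1 / t ^ n ∂μ ≤ 1) :
    ∃ ν : Measure ℝ, IsProbabilityMeasure ν ∧ ν (Icc 0 b)ᶜ = 0 ∧
      (∀ m, ∫ t, t ^ (n + m) ∂ν = c * ∫ t, t ^ m ∂μ) ∧
      ∀ j < n, ∫ t, t ^ (n - j) ∂ν = c * ∫ t, 1 / t ^ j ∂μ := by
  have hpos := ae_pos_of_ae_nonneg_of_measure_zero (hμ.mono fun t ht => ht.1) h0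
  have hd : Measurable fun t : ℝ => c / t ^ n := by fun_prop
  have hd0 : 0 ≤ᵐ[μ] fun t => c / t ^ n := hpos.mono fun t ht => by positivity
  set ν₁ := μ.withDensity fun t => ENNReal.ofReal (c / t ^ n)
  set a := 1 - c * ∫ t, 1 / t ^ n ∂μ
  -- `t ^ n` does not see the atom at `0`, which takes up the mass missing from `ν₁`
  set ν := ν₁ + ENNReal.ofReal a • Measure.dirac 0
  have hintegral : ∀ g f : ℝ → ℝ, g 0 = 0 → Integrable f μ →
      (∀ t, 0 < t → c / t ^ n * g t = c * f t) → ∫ t, g t ∂ν = c * ∫ t, f t ∂μ := by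
    intro g f hg0 hf hgf
    have hgf' : (fun t => c / t ^ n * g t) =ᵐ[μ] fun t => c * f t :=
      hpos.mono fun t ht => hgf t ht
    have hg₁ : Integrable g ν₁ :=
      (integrable_withDensity_ofReal_iff hd hd0 g).2 ((hf.const_mul c).congr hgf'.symm)
    have hg₂ : Integrable g (ENNReal.ofReal a • Measure.dirac 0) :=
      (integrable_dirac (by simp)).smul_measure ENNReal.ofReal_ne_top
    rw [integral_add_measure hg₁ hg₂, integral_withDensity_ofReal hd hd0, integral_smul_measure,
      integral_dirac, hg0, smul_zero, add_zero, integral_congr_ae hgf', integral_const_mul]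
  refine ⟨ν, ⟨?_⟩, ?_, fun m => ?_, fun j hj => ?_⟩
  · have hdint : Integrable (fun t => c / t ^ n) μ := by
      simpa only [mul_one_div] using hint.const_mul c
    have hν₁ : ν₁ univ = ENNReal.ofReal (c * ∫ t, 1 / t ^ n ∂μ) := by
      rw [withDensity_apply _ MeasurableSet.univ, Measure.restrict_univ,
        ← ofReal_integral_eq_lintegral_ofReal hdint hd0, ← integral_const_mul]
      simp_rw [mul_one_div]
    have hmass : 0 ≤ c * ∫ t, 1 / t ^ n ∂μ :=
      mul_nonneg hc (integral_nonneg_of_ae (hpos.mono fun t ht => by positivity))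
    rw [Measure.add_apply, Measure.smul_apply, hν₁, measure_univ, smul_eq_mul, mul_one,
      ← ENNReal.ofReal_add hmass (sub_nonneg.2 hle), add_sub_cancel, ENNReal.ofReal_one]
  · have hν₁ : ν₁ (Icc 0 b)ᶜ = 0 := withDensity_absolutelyContinuous _ _ hμ
    rw [Measure.add_apply, Measure.smul_apply, hν₁]
    simp [Measure.dirac_apply', hb]
  · refine hintegral _ _ (by simp [hn]) ((continuous_pow m).integrable_of_ae_mem_Icc hμ)
      fun t ht => ?_
    rw [pow_add]; field_simp
  · refine hintegral _ _ (by simp [(Nat.sub_pos_of_lt hj).ne'])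
      (integrable_one_div_pow_of_le hpos hint hj.le) fun t ht => ?_
    rw [pow_sub₀ t ht.ne' hj.le]; field_simp

end ShiftedMoments

section WeightedShift

variable {α x : ℕ → ℝ} {n j k : ℕ}

lemma gam_succ (α : ℕ → ℝ) (k : ℕ) : gam α (k + 1) = gam α k * α k ^ 2 :=
  Finset.prod_range_succ _ _

lemma gam_pos (h : ∀ i < k, α i ≠ 0) : 0 < gam α k :=
  Finset.prod_pos fun i hi => sq_pos_of_ne_zero (h i (Finset.mem_range.1 hi))

lemma extSeq_of_lt (hk : k < n) : extSeq n x α k = x (n - k) := if_pos hk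

lemma extSeq_add (n : ℕ) (x α : ℕ → ℝ) (m : ℕ) : extSeq n x α (n + m) = α m := by
  simp [extSeq]

lemma gam_extSeq_add (n : ℕ) (x α : ℕ → ℝ) (m : ℕ) :
    gam (extSeq n x α) (n + m) = gam (extSeq n x α) n * gam α m := by
  simp only [gam, Finset.prod_range_add, extSeq_add]

lemma gam_extSeq_sub (hj : j < n) :
    gam (extSeq n x α) (n - j) = gam (extSeq n x α) (n - (j + 1)) * x (j + 1) ^ 2 := by
  rw [show n - j = n - (j + 1) + 1 by omega, gam_succ, extSeq_of_lt (by omega),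
    show n - (n - (j + 1)) = j + 1 by omega]

lemma gam_extSeq_pos (hx : ∀ j, 1 ≤ j → j ≤ n → 0 < x j) (hk : k ≤ n) :
    0 < gam (extSeq n x α) k :=
  gam_pos fun i hi => by rw [extSeq_of_lt (by omega)]; exact (hx _ (by omega) (by omega)).ne'

lemma bddAbove_range_sq_extSeq (hα : ∀ k, 0 ≤ α k) (hbdd : BddAbove (range α)) :
    BddAbove (range fun k => extSeq n x α k ^ 2) := by
  obtain ⟨C, hC⟩ := hbdd
  have hα2 : BddAbove (range fun k => α k ^ 2) := ⟨C ^ 2, by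
    rintro _ ⟨k, rfl⟩
    exact pow_le_pow_left₀ (hα k) (hC ⟨k, rfl⟩) 2⟩
  refine (((finite_Icc 1 n).image fun j => x j ^ 2).bddAbove.union hα2).mono ?_
  rintro _ ⟨k, rfl⟩
  by_cases hk : k < n
  · exact Or.inl ⟨n - k, ⟨by omega, by omega⟩, by simp [extSeq_of_lt hk]⟩
  · exact Or.inr ⟨k - n, by simp [extSeq, hk]⟩

lemma iSup_sq_le_iSup_sq_extSeq (hα : ∀ k, 0 ≤ α k) (hbdd : BddAbove (range α)) :
    ⨆ k, α k ^ 2 ≤ ⨆ k, extSeq n x α k ^ 2 :=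
  ciSup_le fun k => by
    simpa only [extSeq_add] using
      le_ciSup (bddAbove_range_sq_extSeq (n := n) (x := x) hα hbdd) (n + k)

theorem extSeq_weights_iff (hn : 1 ≤ n) (hx : ∀ j, 1 ≤ j → j ≤ n → 0 < x j) {I : ℕ → ℝ}
    (hI0 : I 0 = 1) (hI : ∀ j ≤ n, 0 < I j) :
    ((∀ j, 1 ≤ j → j ≤ n - 1 → x j ^ 2 = I (j - 1) / I j) ∧ x n ^ 2 ≤ I (n - 1) / I n) ↔
      (∀ j < n, gam (extSeq n x α) n * I j = gam (extSeq n x α) (n - j)) ∧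
        gam (extSeq n x α) n * I n ≤ 1 := by
  set γ := gam (extSeq n x α)
  have hγ : ∀ k ≤ n, 0 < γ k := fun k hk => gam_extSeq_pos hx hk
  have hsub : ∀ j < n, γ (n - j) = γ (n - (j + 1)) * x (j + 1) ^ 2 := fun j hj =>
    gam_extSeq_sub hj
  have hγ1 : γ (n - (n - 1)) = x n ^ 2 := by
    rw [hsub (n - 1) (by omega), Nat.sub_add_cancel hn, Nat.sub_self]
    simp [γ, gam]
  constructor
  · rintro ⟨hratio, hlast⟩
    have hprod : ∀ j < n, γ n * I j = γ (n - j) := by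
      intro j hj
      induction j with
      | zero => simp [hI0]
      | succ j ih =>
        have hxj := hratio (j + 1) (by omega) (by omega)
        rw [Nat.add_sub_cancel, eq_div_iff (hI _ (by omega)).ne'] at hxj
        have := ih (by omega)
        rw [hsub j (by omega), ← hxj] at this
        exact mul_right_cancel₀ (pow_pos (hx (j + 1) (by omega) (by omega)) 2).ne'
          (by linear_combination this)
    refine ⟨hprod, ?_⟩
    have h1 := hprod (n - 1) (by omega)
    rw [hγ1] at h1
    rw [le_div_iff₀ (hI n le_rfl)] at hlast
    refine le_of_mul_le_mul_left ?_ (pow_pos (hx n hn le_rfl) 2)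
    nlinarith [mul_le_mul_of_nonneg_left hlast (hγ n le_rfl).le]
  · rintro ⟨hprod, hlast⟩
    refine ⟨fun j hj1 hjn => ?_, ?_⟩
    · have h1 := hprod (j - 1) (by omega)
      have h2 := hprod j (by omega)
      rw [hsub (j - 1) (by omega), Nat.sub_add_cancel hj1, ← h2] at h1
      rw [eq_div_iff (hI j (by omega)).ne']
      exact mul_left_cancel₀ (hγ n le_rfl).ne' (by linear_combination h1.symm)
    · have h1 := hprod (n - 1) (by omega)
      rw [hγ1] at h1
      rw [le_div_iff₀ (hI n le_rfl), ← h1]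
      nlinarith [hI (n - 1) (by omega)]

end WeightedShift

theorem stmt_11 (α : ℕ → ℝ) (hpos : ∀ k, 0 < α k) (hbdd : BddAbove (Set.range α))
    (μ : Measure ℝ) (hμ : IsBergerMeasure α μ)
    (n : ℕ) (hn : 1 ≤ n) (x : ℕ → ℝ) (hx : ∀ j, 1 ≤ j → j ≤ n → 0 < x j) :
    BergerSubnormal (extSeq n x α) ↔
      (μ {0} = 0 ∧ Integrable (fun t => 1 / t ^ n) μ) ∧
      (∀ j, 1 ≤ j → j ≤ n - 1 →
        x j ^ 2 = (∫ t, 1 / t ^ (j - 1) ∂μ) / ∫ t, 1 / t ^ j ∂μ) ∧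
      x n ^ 2 ≤ (∫ t, 1 / t ^ (n - 1) ∂μ) / ∫ t, 1 / t ^ n ∂μ := by
  obtain ⟨hprob, hsupp, hmom⟩ := hμ
  have hn0 : n ≠ 0 := by omega
  have hc : 0 < gam (extSeq n x α) n := gam_extSeq_pos hx le_rfl
  have hμb : ∀ᵐ t ∂μ, t ∈ Icc 0 (⨆ k, extSeq n x α k ^ 2) := measure_mono_null
    (compl_subset_compl.2 (Icc_subset_Icc_right
      (iSup_sq_le_iSup_sq_extSeq (fun k => (hpos k).le) hbdd))) hsupp
  have hshift : ∀ m, gam (extSeq n x α) (n + m) = gam (extSeq n x α) n * ∫ t, t ^ m ∂μ :=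
    fun m => by rw [gam_extSeq_add, hmom]
  have hI : μ {0} = 0 → Integrable (fun t => 1 / t ^ n) μ → ∀ j ≤ n, 0 < ∫ t, 1 / t ^ j ∂μ :=
    fun h0 hint j hj => by
      have hμpos := ae_pos_of_ae_nonneg_of_measure_zero (hμb.mono fun t ht => ht.1) h0
      exact integral_one_div_pow_pos hμpos (integrable_one_div_pow_of_le hμpos hint hj)
  constructor
  · rintro ⟨ν, hνprob, hνsupp, hνmom⟩
    obtain ⟨h0, hint, hinv, hle⟩ := inverse_moments_of_shifted_moments hn0 hc hμb hνsupp
      fun m => by rw [← hνmom, hshift]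
    exact ⟨⟨h0, hint⟩, (extSeq_weights_iff hn hx (by simp) (hI h0 hint)).2
      ⟨fun j hj => by rw [hinv j hj, ← hνmom], hle⟩⟩
  · rintro ⟨⟨h0, hint⟩, hratio, hlast⟩
    obtain ⟨hinv, hle⟩ := (extSeq_weights_iff hn hx (by simp) (hI h0 hint)).1 ⟨hratio, hlast⟩
    obtain ⟨ν, hνprob, hνsupp, hνshift, hνinv⟩ := exists_shifted_moments_of_inverse_moments hn0
      hc.le (Real.iSup_nonneg fun k => sq_nonneg _) hμb h0 hint hle
    refine ⟨ν, hνprob, hνsupp, fun k => ?_⟩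
    rcases lt_or_ge k n with hk | hk
    · rcases Nat.eq_zero_or_pos k with rfl | hk0
      · simp [gam]
      · rw [← Nat.sub_sub_self hk.le, ← hinv _ (by omega), hνinv _ (by omega)]
    · obtain ⟨m, rfl⟩ := Nat.exists_eq_add_of_le hk
      rw [hshift, hνshift]
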